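/- arXiv:2512.17665 — 5 statements merged into one kernel-verified Lean document; each statement's English description precedes it below -/
import Mathlib

section
/- Let R be a Bézout domain, K its field of fractions, M a flat R-module, and r a natural number. Then M has rank at most r as an R-module if and only if the K-vector space K ⊗_R M has dimension at most r. -/
universe u v

/-- Shannon's rank of flat modules: an `R`-module `P` has rank at most `r` if it is
isomorphic to the direct limit of some directed system of `R`-modules in which every
module is a finitely generated free `R`-module of rank at most `r`. -/
def HasRankLE (R : Type u) [CommRing R] (r : ℕ)
    (P : Type v) [AddCommGroup P] [Module R P] : Prop :=
  ∃ (ι : Type v) (_ : Preorder ι) (_ : IsDirected ι (· ≤ ·)) (_ : Nonempty ι)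
    (_ : DecidableEq ι)
    (G : ι → Type v) (_ : ∀ i, AddCommGroup (G i)) (_ : ∀ i, Module R (G i))
    (f : ∀ i j : ι, i ≤ j → G i →ₗ[R] G j)
    (_ : DirectedSystem G fun i j h => f i j h),
    (∀ i, ∃ n : ℕ, n ≤ r ∧ Nonempty (G i ≃ₗ[R] (Fin n → R))) ∧
    Nonempty (Module.DirectLimit G f ≃ₗ[R] P)

/-!
Both sides are equivalent to `Module.rank R M ≤ r`, since `K ⊗[R] M` has the same rank over `K`
as `M` over `R`. A finite linearly independent family in a direct limit comes from a linearly
independent family in one module of the system, so a direct limit of free modules of rank at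
most `r` has rank at most `r`. Conversely, `M` is the direct limit of its finitely generated
submodules; these are torsion-free because `M` is flat, and over a Bézout domain a finitely
generated torsion-free module is free: it embeds into some `Rⁿ`, the image of the first
coordinate is a principal, hence free, ideal that splits off, and the kernel embeds into `Rⁿ⁻¹`.
-/

open Module Submodule LinearMap

theorem Ideal.free_of_isPrincipal {R : Type*} [CommRing R] [IsDomain R] (I : Ideal R)
    [hI : I.IsPrincipal] : Module.Free R I := by
  obtain ⟨a, rfl⟩ := hI.principal
  obtain rfl | ha := eq_or_ne a 0
  · have : Subsingleton (R ∙ (0 : R)) := by simp only [span_zero_singleton]; infer_instance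
    exact Module.Free.of_subsingleton R _
  · exact Module.Free.of_equiv (LinearEquiv.toSpanNonzeroSingleton R R a ha)

theorem LinearMap.nonempty_equiv_ker_prod_of_surjective {R N P : Type*} [Ring R]
    [AddCommGroup N] [AddCommGroup P] [Module R N] [Module R P] [Module.Projective R P]
    {g : N →ₗ[R] P} (hg : Function.Surjective g) : Nonempty (N ≃ₗ[R] ker g × P) :=
  have hsec := g.exists_rightInverse_of_surjective (range_eq_top.mpr hg)
  ⟨(g.exact_subtype_ker_map.splitSurjectiveEquiv (ker g).injective_subtype
    ⟨hsec.choose, hsec.choose_spec⟩).1⟩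

theorem IsBezout.free_of_injective_pi {R : Type*} [CommRing R] [IsDomain R] [IsBezout R] (n : ℕ) :
    ∀ {N : Type*} [AddCommGroup N] [Module R N] [Module.Finite R N] (φ : N →ₗ[R] Fin n → R),
      Function.Injective φ → Module.Free R N := by
  induction n with
  | zero =>
    intro N _ _ _ φ hφ
    have : Subsingleton N := hφ.subsingleton
    exact Module.Free.of_subsingleton R N
  | succ n ih =>
    intro N _ _ _ φ hφ
    let head : N →ₗ[R] R := LinearMap.proj 0 ∘ₗ φ
    let tail : N →ₗ[R] Fin n → R := LinearMap.pi (fun i ↦ LinearMap.proj i.succ) ∘ₗ φ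
    have : (range head).IsPrincipal := IsBezout.isPrincipal_of_FG _ (fg_range head)
    have := Ideal.free_of_isPrincipal (range head)
    obtain ⟨e⟩ :=
      head.rangeRestrict.nonempty_equiv_ker_prod_of_surjective head.surjective_rangeRestrict
    have : Module.Finite R (ker head.rangeRestrict) :=
      .of_surjective (LinearMap.fst _ _ _ ∘ₗ e.toLinearMap) (Prod.fst_surjective.comp e.surjective)
    have : Module.Free R (ker head.rangeRestrict) := by
      refine ih (tail ∘ₗ (ker _).subtype) ((injective_iff_map_eq_zero _).mpr fun x hx ↦ ?_)
      have hhead : head x = 0 := by simpa [LinearMap.ker_rangeRestrict] using x.2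
      have htail : tail x = 0 := hx
      refine Subtype.ext (hφ ?_)
      rw [ZeroMemClass.coe_zero, map_zero]
      funext i
      refine Fin.cases ?_ (fun j ↦ ?_) i
      · exact hhead
      · exact congr_fun htail j
    exact Module.Free.of_equiv e.symm

theorem Module.exists_injective_pi_of_isTorsionFree {R N : Type*} [CommRing R] [IsDomain R]
    [AddCommGroup N] [Module R N] [Module.Finite R N] [IsTorsionFree R N] :
    ∃ (n : ℕ) (φ : N →ₗ[R] Fin n → R), Function.Injective φ := by
  classical
  obtain ⟨k, s, hs⟩ := Module.Finite.exists_fin (R := R) (M := N)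
  obtain ⟨I, hI, hmax⟩ := exists_maximal_linearIndepOn R s
  rw [Set.image_eq_range] at hmax
  -- a nonzero multiple of every generator lies in the span `S` of a maximal independent subfamily
  set S := span R (Set.range fun i : I ↦ s i)
  have hmult : ∀ i, ∃ a : R, a ≠ 0 ∧ a • s i ∈ S := fun i ↦ by
    by_cases hi : i ∈ I
    · exact ⟨1, one_ne_zero, by simpa using subset_span (Set.mem_range_self (⟨i, hi⟩ : I))⟩
    · exact hmax i hi
  choose a ha0 haS using hmult
  have hA : ∏ i, a i ≠ 0 := Finset.prod_ne_zero_iff.mpr fun i _ ↦ ha0 i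
  have hAS : ∀ x : N, (∏ i, a i) • x ∈ S := by
    suffices span R (Set.range s) ≤ S.comap (lsmul R N (∏ i, a i)) by
      intro x; exact this (hs ▸ mem_top)
    refine span_le.mpr ?_
    rintro _ ⟨i, rfl⟩
    rw [SetLike.mem_coe, mem_comap, lsmul_apply, ← Finset.prod_erase_mul _ _ (Finset.mem_univ i),
      mul_smul]
    exact S.smul_mem _ (haS i)
  let scale : N →ₗ[R] S := (lsmul R N (∏ i, a i)).codRestrict S hAS
  refine ⟨Fintype.card I, (LinearEquiv.funCongrLeft R R (Fintype.equivFin I).symm).toLinearMap ∘ₗ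
    (Basis.span hI).equivFun.toLinearMap ∘ₗ scale, ?_⟩
  simp only [coe_comp, LinearEquiv.coe_coe, EquivLike.comp_injective]
  intro x y hxy
  exact smul_right_injective N hA (congr_arg Subtype.val hxy)

theorem IsBezout.free_of_isTorsionFree {R N : Type*} [CommRing R] [IsDomain R] [IsBezout R]
    [AddCommGroup N] [Module R N] [Module.Finite R N] [IsTorsionFree R N] : Module.Free R N :=
  have ⟨n, φ, hφ⟩ := Module.exists_injective_pi_of_isTorsionFree (R := R) (N := N)
  IsBezout.free_of_injective_pi n φ hφ

theorem Module.DirectLimit.exists_of_finite {R ι : Type*} [Semiring R] [Preorder ι]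
    [IsDirectedOrder ι] [Nonempty ι] [DecidableEq ι] {G : ι → Type*} [∀ i, AddCommMonoid (G i)]
    [∀ i, Module R (G i)] {f : ∀ i j, i ≤ j → G i →ₗ[R] G j} [DirectedSystem G (f · · ·)]
    {κ : Type*} [Finite κ] (v : κ → DirectLimit G f) :
    ∃ (i : ι) (w : κ → G i), of R ι G f i ∘ w = v := by
  choose j x hx using fun k ↦ DirectLimit.exists_of (v k)
  obtain ⟨i, hi⟩ := Finite.bddAbove_range j
  refine ⟨i, fun k ↦ f (j k) i (hi ⟨k, rfl⟩) (x k), funext fun k ↦ ?_⟩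
  simp [DirectLimit.of_f, hx]

theorem Module.DirectLimit.rank_le_of_forall_rank_le {R ι : Type*} [Ring R] [Nontrivial R]
    [Preorder ι] [IsDirectedOrder ι] [Nonempty ι] [DecidableEq ι] {G : ι → Type*}
    [∀ i, AddCommGroup (G i)] [∀ i, Module R (G i)] {f : ∀ i j, i ≤ j → G i →ₗ[R] G j}
    [DirectedSystem G (f · · ·)] {r : ℕ} (hG : ∀ i, Module.rank R (G i) ≤ r) :
    Module.rank R (DirectLimit G f) ≤ r := by
  refine rank_le fun s hs ↦ ?_
  obtain ⟨i, w, hw⟩ := exists_of_finite (R := R) (fun x : s ↦ (x : DirectLimit G f))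
  have hw : LinearIndependent R w := (hw ▸ hs).of_comp
  simpa using hw.cardinal_lift_le_rank.trans (Cardinal.lift_le.mpr (hG i))

theorem HasRankLE.rank_le {R : Type u} [CommRing R] [Nontrivial R] {r : ℕ}
    {P : Type v} [AddCommGroup P] [Module R P] (h : HasRankLE R r P) : Module.rank R P ≤ r := by
  obtain ⟨ι, _, _, _, _, G, _, _, f, _, hG, ⟨e⟩⟩ := h
  rw [← e.rank_eq]
  refine DirectLimit.rank_le_of_forall_rank_le fun i ↦ ?_
  obtain ⟨n, hn, ⟨ei⟩⟩ := hG i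
  rw [← Cardinal.lift_le_nat_iff.{_, u}, ei.lift_rank_eq, rank_fin_fun, Cardinal.lift_natCast]
  exact_mod_cast hn

theorem hasRankLE_of_rank_le {R : Type u} [CommRing R] [IsDomain R] [IsBezout R] {r : ℕ}
    {P : Type v} [AddCommGroup P] [Module R P] [IsTorsionFree R P] (h : Module.rank R P ≤ r) :
    HasRankLE R r P := by
  classical
  refine ⟨{N : Submodule R P // N.FG}, inferInstance, inferInstance, ⟨⟨⊥, fg_bot⟩⟩,
    inferInstance, (·.1), _, _, fgSystem R P, inferInstance, fun N ↦ ?_, ⟨fgSystem.equiv R P⟩⟩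
  have : Module.Finite R N.1 := Module.Finite.iff_fg.mpr N.2
  have : Module.Free R N.1 := IsBezout.free_of_isTorsionFree
  refine ⟨finrank R N.1, ?_, ⟨(finBasis R N.1).equivFun⟩⟩
  exact_mod_cast (finrank_eq_rank R N.1).trans_le ((Submodule.rank_le N.1).trans h)

universe w

/-- Lemma 3.8: over a Bézout domain `R` with fraction field `K`, a flat `R`-module `M`
has rank at most `r` if and only if the `K`-vector space `K ⊗_R M` has dimension at
most `r`. -/
theorem hasRankLE_iff_rank_baseChange_le (R : Type u) [CommRing R] [IsDomain R] [IsBezout R]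
    (K : Type w) [Field K] [Algebra R K] [IsFractionRing R K]
    (M : Type v) [AddCommGroup M] [Module R M] [Module.Flat R M] (r : ℕ) :
    HasRankLE R r M ↔ Module.rank K (TensorProduct R K M) ≤ r := by
  rw [← Cardinal.lift_le_nat_iff.{_, v}, (TensorProduct.isBaseChange R M K).lift_rank_eq,
    Cardinal.lift_le_nat_iff]
  exact ⟨HasRankLE.rank_le, hasRankLE_of_rank_le⟩
end

section
/- Let R be a commutative ring, g ∈ R[X] a monic polynomial of degree m, and f ∈ R[X] any polynomial. Let S be the localization of the quotient ring R[X]/(g) at the powers of the image of f. Then S, regarded as an R-module, has rank at most m. -/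
/-!
A localization `S = A[1/t]` is the colimit of `A --t--> A --t--> A --t--> ⋯`: the `i`-th copy
of `A` maps to `S` by `x ↦ x / tⁱ`. When `A = R[X]/(g)` with `g` monic of degree `m`, every term
of this sequence is free of rank `m` over `R`.
-/

universe u v

universe w

namespace IsLocalization.Away

variable (R : Type*) {A : Type*} [CommRing R] [CommRing A] [Algebra R A] (t : A)

/-- Indexed by `ULift ℕ`: `HasRankLE` wants the index type in the universe of the module. -/
def mulPowSystem (i j : ULift.{w} ℕ) (_ : i ≤ j) : A →ₗ[R] A :=
  Algebra.lmul R A (t ^ (j.down - i.down))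

@[simp]
lemma mulPowSystem_apply (i j : ULift.{w} ℕ) (hij : i ≤ j) (x : A) :
    mulPowSystem R t i j hij x = t ^ (j.down - i.down) * x :=
  rfl

instance directedSystem_mulPowSystem :
    DirectedSystem (fun _ : ULift.{w} ℕ => A) fun i j h => mulPowSystem R t i j h where
  map_self i x := by simp
  map_map k j i hij hjk x := by
    have hij : i.down ≤ j.down := hij
    have hjk : j.down ≤ k.down := hjk
    simp only [mulPowSystem_apply, ← mul_assoc, ← pow_add]
    congr 2
    omega

variable (S : Type*) [CommRing S] [Algebra A S] [Algebra R S] [IsScalarTower R A S]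
  [IsLocalization.Away t S]

noncomputable def divPow (n : ℕ) : A →ₗ[R] S :=
  Algebra.lmul R S (mk' S 1 (Submonoid.pow t n)) ∘ₗ (IsScalarTower.toAlgHom R A S).toLinearMap

lemma divPow_apply (n : ℕ) (x : A) : divPow R t S n x = mk' S x (Submonoid.pow t n) := by
  simp [divPow, mk'_eq_mul_mk'_one x, mul_comm]

lemma divPow_mulPowSystem (i j : ULift.{w} ℕ) (hij : i ≤ j) (x : A) :
    divPow R t S j.down (mulPowSystem R t i j hij x) = divPow R t S i.down x := by
  have hij : i.down ≤ j.down := hij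
  simp only [divPow_apply, mulPowSystem_apply, mk'_eq_iff_eq, Submonoid.pow_apply]
  rw [← mul_assoc, ← pow_add, Nat.add_sub_cancel' hij]

noncomputable def ofDirectLimit :
    Module.DirectLimit (fun _ : ULift.{w} ℕ => A) (mulPowSystem R t) →ₗ[R] S :=
  Module.DirectLimit.lift R _ _ _ (fun i => divPow R t S i.down) (divPow_mulPowSystem R t S)

lemma ofDirectLimit_of (i : ULift.{w} ℕ) (x : A) :
    ofDirectLimit R t S (Module.DirectLimit.of R _ _ _ i x) =
      mk' S x (Submonoid.pow t i.down) := by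
  simp [ofDirectLimit, divPow_apply]

lemma ofDirectLimit_surjective :
    Function.Surjective (ofDirectLimit.{w} R t S) := by
  intro z
  obtain ⟨x, ⟨_, n, rfl⟩, rfl⟩ := exists_mk'_eq (Submonoid.powers t) z
  exact ⟨_, ofDirectLimit_of R t S ⟨n⟩ x⟩

lemma ofDirectLimit_injective :
    Function.Injective (ofDirectLimit.{w} R t S) := by
  refine (injective_iff_map_eq_zero _).mpr fun z hz => ?_
  obtain ⟨i, x, rfl⟩ := Module.DirectLimit.exists_of z
  rw [ofDirectLimit_of, mk'_eq_zero_iff] at hz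
  obtain ⟨⟨_, n, rfl⟩, hx⟩ := hz
  have hle : i ≤ ⟨i.down + n⟩ := Nat.le_add_right i.down n
  rw [← Module.DirectLimit.of_f (hij := hle), mulPowSystem_apply, Nat.add_sub_cancel_left, hx,
    map_zero]

noncomputable def directLimitEquiv :
    Module.DirectLimit (fun _ : ULift.{w} ℕ => A) (mulPowSystem R t) ≃ₗ[R] S :=
  .ofBijective (ofDirectLimit R t S)
    ⟨ofDirectLimit_injective R t S,
      ofDirectLimit_surjective R t S⟩

end IsLocalization.Away

theorem hasRankLE_of_isLocalizationAway {R : Type u} {A : Type v} [CommRing R] [CommRing A]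
    [Algebra R A] {m : ℕ} (b : Module.Basis (Fin m) R A) (t : A) (S : Type v) [CommRing S]
    [Algebra A S] [Algebra R S] [IsScalarTower R A S] [IsLocalization.Away t S] :
    HasRankLE R m S :=
  ⟨ULift.{v} ℕ, inferInstance, inferInstance, inferInstance, inferInstance, fun _ => A,
    fun _ => inferInstance, fun _ => inferInstance, IsLocalization.Away.mulPowSystem R t,
    inferInstance, fun _ => ⟨m, le_rfl, ⟨b.equivFun⟩⟩,
    ⟨IsLocalization.Away.directLimitEquiv R t S⟩⟩

/-- Example 3.3 (standard étale type algebras): for a monic `g` of degree `m` and any `f`,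
the localization of `R[X]/(g)` at the powers of the image of `f` has rank at most `m`
as an `R`-module. -/
theorem standardEtale_hasRankLE (R : Type u) [CommRing R] (m : ℕ) (g f : Polynomial R)
    (hg : g.Monic) (hdeg : g.natDegree = m) :
    letI A := Polynomial R ⧸ Ideal.span {g}
    letI S := Localization.Away (Ideal.Quotient.mk (Ideal.span {g}) f)
    letI : Algebra R S := ((algebraMap A S).comp (algebraMap R A)).toAlgebra
    HasRankLE R m S := by
  subst hdeg
  exact hasRankLE_of_isLocalizationAway (AdjoinRoot.powerBasis' hg).basis (AdjoinRoot.mk g f)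
    (Localization.Away (AdjoinRoot.mk g f))
end

section
/- Let R → S be a map of commutative rings and r a natural number. Suppose that S, regarded as an R-module, is weakly finitely generated of rank at most r, i.e. there exist a flat R-module P of rank at most r and a surjective R-linear map P → S. Then the S-module Ω_{S/R} of Kähler differentials is weakly finitely generated of rank at most r: there exist a flat S-module Q of rank at most r and a surjective S-linear map Q → Ω_{S/R}. -/
universe u v

open TensorProduct Module

section Aux

variable {R : Type*} [CommRing R] (S : Type*) [CommRing S] [Algebra R S]
variable {ι : Type*} [Preorder ι] [IsDirected ι (· ≤ ·)] [Nonempty ι] [DecidableEq ι]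
variable (G : ι → Type*) [∀ i, AddCommGroup (G i)] [∀ i, Module R (G i)]
variable (f : ∀ i j : ι, i ≤ j → G i →ₗ[R] G j) [DirectedSystem G fun i j h => f i j h]

omit [IsDirected ι fun x1 x2 => x1 ≤ x2] [Nonempty ι] [DecidableEq ι] in
instance directedSystem_baseChange :
    DirectedSystem (fun i => S ⊗[R] G i) fun i j h => ⇑((f i j h).baseChange S) := by
  constructor
  · intro i x
    induction x using TensorProduct.induction_on with
    | zero => simp
    | tmul s g =>
      rw [LinearMap.baseChange_tmul, Module.DirectedSystem.map_self (f := f)]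
    | add x y hx hy => simp only [map_add, hx, hy]
  · intro k j i hij hjk x
    induction x using TensorProduct.induction_on with
    | zero => simp
    | tmul s g =>
      rw [LinearMap.baseChange_tmul, LinearMap.baseChange_tmul, LinearMap.baseChange_tmul,
        Module.DirectedSystem.map_map (f := f)]
    | add x y hx hy => simp only [map_add, hx, hy]

set_option maxHeartbeats 1000000 in
set_option synthInstance.maxHeartbeats 400000 in
/-- Base change commutes with direct limits of modules. -/
noncomputable def directLimitBaseChange :
    Module.DirectLimit (fun i => S ⊗[R] G i) (fun i j h => (f i j h).baseChange S) ≃ₗ[S]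
      S ⊗[R] Module.DirectLimit G f := by
  letI : Module R (Module.DirectLimit (fun i => S ⊗[R] G i)
      (fun i j h => (f i j h).baseChange S)) := Module.compHom _ (algebraMap R S)
  haveI : IsScalarTower R S (Module.DirectLimit (fun i => S ⊗[R] G i)
      (fun i j h => (f i j h).baseChange S)) :=
    IsScalarTower.of_algebraMap_smul fun r x => rfl
  -- forward map
  refine LinearEquiv.ofLinear
    (Module.DirectLimit.lift S ι _ (fun i j h => (f i j h).baseChange S)
      (fun i => (Module.DirectLimit.of R ι G f i).baseChange S) ?_)
    ((Module.DirectLimit.lift R ι G f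
      (fun i => ((Module.DirectLimit.of S ι _ (fun i j h => (f i j h).baseChange S) i
        ).restrictScalars R) ∘ₗ TensorProduct.mk R S (G i) 1) ?_).liftBaseChange S) ?_ ?_
  · intro i j hij x
    induction x using TensorProduct.induction_on with
    | zero => simp
    | tmul s g =>
      rw [LinearMap.baseChange_tmul, LinearMap.baseChange_tmul, LinearMap.baseChange_tmul,
        Module.DirectLimit.of_f]
    | add x y hx hy => simp only [map_add, hx, hy]
  · intro i j hij x
    have h1 : (1 : S) ⊗ₜ[R] (f i j hij x) =
        ((f i j hij).baseChange S) ((1 : S) ⊗ₜ[R] x) := rfl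
    show (Module.DirectLimit.of S ι (fun i => S ⊗[R] G i)
        (fun i j h => (f i j h).baseChange S) j) ((1 : S) ⊗ₜ[R] (f i j hij x)) =
      (Module.DirectLimit.of S ι (fun i => S ⊗[R] G i)
        (fun i j h => (f i j h).baseChange S) i) ((1 : S) ⊗ₜ[R] x)
    rw [h1, Module.DirectLimit.of_f]
  · apply LinearMap.ext
    intro x
    induction x using TensorProduct.induction_on with
    | zero => simp
    | tmul s p =>
      rw [LinearMap.comp_apply, LinearMap.liftBaseChange_tmul, map_smul]
      rw [LinearMap.id_apply]
      induction p using Module.DirectLimit.induction_on with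
      | ih i g =>
        rw [Module.DirectLimit.lift_of]
        rw [show (((Module.DirectLimit.of S ι _ (fun i j h => (f i j h).baseChange S) i
          ).restrictScalars R) ∘ₗ TensorProduct.mk R S (G i) 1) g =
          (Module.DirectLimit.of S ι _ (fun i j h => (f i j h).baseChange S) i)
            ((1 : S) ⊗ₜ[R] g) from rfl]
        rw [Module.DirectLimit.lift_of, LinearMap.baseChange_tmul]
        rw [TensorProduct.smul_tmul', smul_eq_mul, mul_one]
    | add x y hx hy =>
      rw [LinearMap.comp_apply, LinearMap.id_apply] at hx hy ⊢
      rw [map_add, map_add, hx, hy]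
  · apply LinearMap.ext
    intro x
    induction x using Module.DirectLimit.induction_on with
    | ih i z =>
      induction z using TensorProduct.induction_on with
      | zero => simp
      | tmul s g =>
        rw [LinearMap.comp_apply, LinearMap.id_apply]
        rw [Module.DirectLimit.lift_of, LinearMap.baseChange_tmul,
          LinearMap.liftBaseChange_tmul, Module.DirectLimit.lift_of]
        rw [show (((Module.DirectLimit.of S ι _ (fun i j h => (f i j h).baseChange S) i
          ).restrictScalars R) ∘ₗ TensorProduct.mk R S (G i) 1) g =
          (Module.DirectLimit.of S ι _ (fun i j h => (f i j h).baseChange S) i)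
            ((1 : S) ⊗ₜ[R] g) from rfl]
        rw [← map_smul, TensorProduct.smul_tmul', smul_eq_mul, mul_one]
      | add z w hz hw =>
        simp only [LinearMap.comp_apply, LinearMap.id_apply] at hz hw ⊢
        simp only [map_add, hz, hw]

end Aux

/-- Base change preserves rank at most `r`. -/
theorem HasRankLE.baseChange {R : Type u} [CommRing R] {r : ℕ}
    (S : Type v) [CommRing S] [Algebra R S]
    {P : Type (max u v)} [AddCommGroup P] [Module R P]
    (hP : HasRankLE R r P) : HasRankLE S r (S ⊗[R] P) := by
  obtain ⟨ι, pre, dir, ne, dec, G, aG, mG, f, sys, hfin, ⟨e⟩⟩ := hP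
  refine ⟨ι, pre, dir, ne, dec, fun i => S ⊗[R] G i, inferInstance, inferInstance,
    fun i j h => (f i j h).baseChange S, directedSystem_baseChange S G f, ?_, ?_⟩
  · intro i
    obtain ⟨n, hn, ⟨ei⟩⟩ := hfin i
    exact ⟨n, hn, ⟨(LinearEquiv.baseChange R S _ _ ei).trans
      (TensorProduct.piScalarRight R S S (Fin n))⟩⟩
  · exact ⟨(directLimitBaseChange S G f).trans (LinearEquiv.baseChange R S _ _ e)⟩

/-- Lemma 3.23 (classical, π₀ content): if `S` is weakly finitely generated of rank at most
`r` as an `R`-module, then the module of Kähler differentials `Ω_{S/R}` is weakly finitely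
generated of rank at most `r` as an `S`-module. -/
theorem kaehlerDifferential_weaklyFG (R : Type u) [CommRing R]
    (S : Type v) [CommRing S] [Algebra R S] (r : ℕ)
    (h : ∃ (P : Type (max u v)) (_ : AddCommGroup P) (_ : Module R P),
        Module.Flat R P ∧ HasRankLE R r P ∧
          ∃ p : P →ₗ[R] S, Function.Surjective p) :
    ∃ (Q : Type (max u v)) (_ : AddCommGroup Q) (_ : Module S Q),
        Module.Flat S Q ∧ HasRankLE S r Q ∧
          ∃ q : Q →ₗ[S] KaehlerDifferential R S, Function.Surjective q := by
  obtain ⟨P, _, _, hflat, hrank, p, hp⟩ := h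
  haveI := hflat
  refine ⟨S ⊗[R] P, inferInstance, inferInstance, inferInstance,
    HasRankLE.baseChange S hrank, (KaehlerDifferential.D R S).tensorProductTo ∘ₗ p.baseChange S,
    ?_⟩
  apply (KaehlerDifferential.tensorProductTo_surjective R S).comp
  rw [LinearMap.baseChange_eq_ltensor]
  exact LinearMap.lTensor_surjective S hp
end

section
/- Let C be a category and let x00, x01, x10, x11 be objects of C together with morphisms a : x00 → x01, l : x00 → x10, d : x10 → x01, j : x10 → x11, and k : x01 → x11, such that a ≫ k = l ≫ j and this commuting square (with the two compositions to x11) is a pullback square. Assume that the equalizer E_up of the parallel pair (a, l ≫ d) : x00 ⇉ x01 exists and that the equalizer E_low of the parallel pair (j, d ≫ k) : x10 ⇉ x11 exists. Then the canonical morphism E_up → E_low, obtained from the universal property of E_low applied to the morphism ι_up ≫ l (where ι_up : E_up → x00 is the equalizer inclusion), is an isomorphism. -/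
universe u v

open CategoryTheory CategoryTheory.Limits

/-- Lemma 2.25 (1-categorical instance): given a Cartesian square
`x00 → x01 → x11`, `x00 → x10 → x11` together with a diagonal `d : x10 → x01` (neither
triangle being required to commute), the canonical map from the equalizer of
`(a, l ≫ d) : x00 ⇉ x01` to the equalizer of `(j, d ≫ k) : x10 ⇉ x11` is an
isomorphism. -/
theorem equalizer_upper_triangle_iso_lower_triangle
    {C : Type u} [Category.{v} C] {x00 x01 x10 x11 : C}
    (a : x00 ⟶ x01) (l : x00 ⟶ x10) (d : x10 ⟶ x01) (j : x10 ⟶ x11) (k : x01 ⟶ x11)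
    (hpb : IsPullback a l k j)
    [HasEqualizer a (l ≫ d)] [HasEqualizer j (d ≫ k)]
    (w : (equalizer.ι a (l ≫ d) ≫ l) ≫ j = (equalizer.ι a (l ≫ d) ≫ l) ≫ (d ≫ k)) :
    IsIso (equalizer.lift (equalizer.ι a (l ≫ d) ≫ l) w) := by
  set ι₂ := equalizer.ι j (d ≫ k)
  set ι₁ := equalizer.ι a (l ≫ d)
  have hcond : (ι₂ ≫ d) ≫ k = ι₂ ≫ j := by
    rw [Category.assoc, ← equalizer.condition j (d ≫ k)]
  -- the map into x00 via the pullback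
  set m : equalizer j (d ≫ k) ⟶ x00 := hpb.lift (ι₂ ≫ d) ι₂ hcond with hm
  have hma : m ≫ a = ι₂ ≫ d := hpb.lift_fst _ _ _
  have hml : m ≫ l = ι₂ := hpb.lift_snd _ _ _
  have hmeq : m ≫ a = m ≫ (l ≫ d) := by
    rw [hma, ← Category.assoc, hml]
  set g : equalizer j (d ≫ k) ⟶ equalizer a (l ≫ d) := equalizer.lift m hmeq with hg
  refine ⟨g, ?_, ?_⟩
  · apply equalizer.hom_ext
    rw [Category.assoc, equalizer.lift_ι, Category.id_comp]
    -- goal : equalizer.lift _ w ≫ m = ι₁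
    apply hpb.hom_ext
    · rw [Category.assoc, hma, ← Category.assoc, equalizer.lift_ι, Category.assoc,
        ← equalizer.condition a (l ≫ d)]
    · rw [Category.assoc, hml, equalizer.lift_ι]
  · apply equalizer.hom_ext
    rw [Category.assoc, equalizer.lift_ι, ← Category.assoc, equalizer.lift_ι,
      hml, Category.id_comp]
end

section
/- Let A be a commutative ring, S a submonoid of A, and ι : A → S⁻¹A the localization map. Inside the polynomial ring (S⁻¹A)[t], let R be the set of polynomials whose constant coefficient lies in the image of ι. Then R is an A-subalgebra of (S⁻¹A)[t], the family of A-subalgebras A[ι(s)⁻¹·t] (the A-subalgebra generated by the element ι(s)⁻¹·t) for s ∈ S is directed under inclusion (for s, s' ∈ S one has A[ι(s)⁻¹·t] ⊆ A[ι(s s')⁻¹·t]), and R equals the union over s ∈ S of the subalgebras A[ι(s)⁻¹·t]. -/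
universe u

open Polynomial

/-- Example 3.26 (colimit presentation): the set `R = A + t·(S⁻¹A)[t]` of polynomials over
`S⁻¹A` whose constant coefficient lies in the image of `A` is an `A`-subalgebra of
`(S⁻¹A)[t]`, the family of subalgebras `A[ι(s)⁻¹·t]` for `s ∈ S` is directed under
inclusion, and `R` is the union of these subalgebras. -/
theorem constCoeff_in_image_subalgebra_eq_iUnion (A : Type u) [CommRing A] (S : Submonoid A) :
    ∃ R : Subalgebra A (Polynomial (Localization S)),
      (R : Set (Polynomial (Localization S))) =
        {p : Polynomial (Localization S) |
          p.coeff 0 ∈ Set.range (algebraMap A (Localization S))} ∧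
      (∀ s s' : S,
        Algebra.adjoin A {Polynomial.C (Localization.mk 1 s) * Polynomial.X} ≤
          Algebra.adjoin A {Polynomial.C (Localization.mk 1 (s * s')) * Polynomial.X}) ∧
      (R : Set (Polynomial (Localization S))) =
        ⋃ s : S,
          (Algebra.adjoin A {Polynomial.C (Localization.mk 1 s) * Polynomial.X} :
            Set (Polynomial (Localization S))) := by
  classical
  set L := Localization S with hL
  set adj : S → Subalgebra A (Polynomial L) :=
    fun s => Algebra.adjoin A {Polynomial.C (Localization.mk 1 s) * Polynomial.X} with hadj
  -- the subalgebra R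
  let R : Subalgebra A (Polynomial L) :=
    { carrier := {p : Polynomial L | p.coeff 0 ∈ Set.range (algebraMap A L)}
      mul_mem' := by
        rintro p q ⟨a, ha⟩ ⟨b, hb⟩
        exact ⟨a * b, by rw [map_mul, ha, hb, Polynomial.mul_coeff_zero]⟩
      add_mem' := by
        rintro p q ⟨a, ha⟩ ⟨b, hb⟩
        exact ⟨a + b, by rw [map_add, ha, hb, Polynomial.coeff_add]⟩
      algebraMap_mem' := by
        intro r
        exact ⟨r, by simp [Polynomial.algebraMap_apply]⟩ }
  -- monotonicity
  have hmono : ∀ s s' : S, adj s ≤ adj (s * s') := by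
    intro s s'
    apply Algebra.adjoin_le
    intro x hx
    rw [Set.mem_singleton_iff] at hx
    subst hx
    have key : (Localization.mk 1 s : L)
        = algebraMap A L (s' : A) * Localization.mk 1 (s * s') := by
      rw [← Localization.mk_algebraMap, Localization.mk_mul,
        Localization.mk_eq_mk_iff, Localization.r_iff_exists]
      exact ⟨1, by simp [Algebra.algebraMap_self]⟩
    rw [key, map_mul, mul_assoc]
    have : Polynomial.C (algebraMap A L (s' : A))
        = algebraMap A (Polynomial L) (s' : A) := rfl
    rw [this]
    exact Subalgebra.mul_mem _ (Subalgebra.algebraMap_mem _ _)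
      (Algebra.self_mem_adjoin_singleton _ _)
  haveI : Nonempty S := ⟨1⟩
  have hdir : Directed (· ≤ ·) adj := fun s s' =>
    ⟨s * s', hmono s s', (mul_comm s' s) ▸ hmono s' s⟩
  set T : Subalgebra A (Polynomial L) := ⨆ s, adj s with hT
  -- X ∈ T
  have hle : ∀ s : S, adj s ≤ T := fun s => le_iSup adj s
  have hX : (Polynomial.X : Polynomial L) ∈ T := by
    have : (Polynomial.X : Polynomial L)
        = Polynomial.C (Localization.mk 1 (1 : S)) * Polynomial.X := by
      rw [Localization.mk_one, map_one, one_mul]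
    rw [this]
    exact hle 1 (Algebra.self_mem_adjoin_singleton _ _)
  have hCX : ∀ c : L, Polynomial.C c * Polynomial.X ∈ T := by
    intro c
    induction c using Localization.induction_on with
    | H y =>
      obtain ⟨a, s⟩ := y
      have key : (Localization.mk a s : L)
          = algebraMap A L a * Localization.mk 1 s := by
        rw [← Localization.mk_algebraMap, Localization.mk_mul, mul_one, one_mul]
        simp [Algebra.algebraMap_self]
      rw [key, map_mul, mul_assoc]
      have : Polynomial.C (algebraMap A L a)
          = algebraMap A (Polynomial L) a := rfl
      rw [this]
      exact Subalgebra.mul_mem _ (Subalgebra.algebraMap_mem _ _)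
        (hle s (Algebra.self_mem_adjoin_singleton _ _))
  have hmulX : ∀ q : Polynomial L, q * Polynomial.X ∈ T := by
    intro q
    induction q using Polynomial.induction_on' with
    | add p q hp hq =>
      rw [add_mul]; exact add_mem hp hq
    | monomial n a =>
      rw [← Polynomial.C_mul_X_pow_eq_monomial]
      have : Polynomial.C a * Polynomial.X ^ n * Polynomial.X
          = (Polynomial.C a * Polynomial.X) * Polynomial.X ^ n := by ring
      rw [this]
      exact mul_mem (hCX a) (pow_mem hX n)
  -- R = T
  have hRT : R = T := by
    apply le_antisymm
    · intro p hp
      obtain ⟨a, ha⟩ := hp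
      have := Polynomial.divX_mul_X_add p
      rw [← this, ← ha]
      exact add_mem (hmulX _) (Subalgebra.algebraMap_mem T a)
    · rw [hT]
      apply iSup_le
      intro s
      apply Algebra.adjoin_le
      intro x hx
      rw [Set.mem_singleton_iff] at hx
      subst hx
      exact ⟨0, by simp⟩
  refine ⟨R, rfl, hmono, ?_⟩
  rw [hRT, hT, Subalgebra.coe_iSup_of_directed hdir]
end
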